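/- arXiv:1609.00763 — 5 statements merged into one kernel-verified Lean document; each statement's English description precedes it below -/
import Mathlib

section
/- For all n, k ≥ 1, the multigraph K_n^k is not DP-degree-colorable; that is, there exists a cover (L,H) of K_n^k with |L(v)| = k(n−1) = deg(v) for every vertex v such that K_n^k is not (L,H)-colorable. -/
open scoped Classical

/-- A multigraph on vertex type `V`: a symmetric edge-multiplicity function with no loops. -/
structure Multigraph (V : Type) where
  e : V → V → ℕ
  symm : ∀ u v, e u v = e v u
  loopless : ∀ v, e v v = 0

namespace Multigraph

variable {V : Type}

/-- `u` and `v` are adjacent if they are distinct and joined by at least one edge. -/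
def Adj (G : Multigraph V) (u v : V) : Prop := u ≠ v ∧ 1 ≤ G.e u v

/-- The underlying simple graph of a multigraph. -/
def toSimpleGraph (G : Multigraph V) : SimpleGraph V where
  Adj := G.Adj
  symm := ⟨fun u v h => ⟨Ne.symm h.1, by rw [G.symm]; exact h.2⟩⟩
  loopless := ⟨fun v h => h.1 rfl⟩

/-- The degree of a vertex: the sum of edge multiplicities at it. -/
def deg [Fintype V] (G : Multigraph V) (v : V) : ℕ := ∑ u, G.e v u

/-- The induced sub-multigraph on a set of vertices. -/
def induce (G : Multigraph V) (B : Set V) : Multigraph B where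
  e u v := G.e u v
  symm u v := G.symm u v
  loopless v := G.loopless v

/-- A cover `(L, H)` of a multigraph `G`: pairwise disjoint lists `L v` of colors and a
graph `H` on the union of the lists (given by its adjacency relation `HAdj`), such that each
`L v` spans a clique, every edge of `H` joins colors of a single list or colors of lists of
adjacent vertices, and each color of `L u` has at most `e_G(u,v)` neighbors in `L v`. -/
structure Cover (G : Multigraph V) (C : Type) where
  L : V → Finset C
  HAdj : C → C → Prop
  Hsymm : ∀ x y, HAdj x y → HAdj y x
  Hirrefl : ∀ x, ¬ HAdj x x
  disjoint : ∀ u v, u ≠ v → Disjoint (L u) (L v)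
  cliques : ∀ v, ∀ x ∈ L v, ∀ y ∈ L v, x ≠ y → HAdj x y
  edges_within : ∀ x y, HAdj x y → ∃ u v, x ∈ L u ∧ y ∈ L v ∧ (u = v ∨ G.Adj u v)
  matching : ∀ u v, u ≠ v → ∀ x ∈ L u, ((L v).filter fun y => HAdj x y).card ≤ G.e u v

/-- An `(L,H)`-coloring: an independent set of `H` meeting every list in exactly one color. -/
def Cover.IsColoring {G : Multigraph V} {C : Type} (cov : Cover G C) (I : Finset C) : Prop :=
  (∀ x ∈ I, ∃ v, x ∈ cov.L v) ∧
  (∀ x ∈ I, ∀ y ∈ I, ¬ cov.HAdj x y) ∧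
  (∀ v, (I ∩ cov.L v).card = 1)

/-- `G` is `(L,H)`-colorable if an `(L,H)`-coloring exists. -/
def Cover.Colorable {G : Multigraph V} {C : Type} (cov : Cover G C) : Prop :=
  ∃ I, cov.IsColoring I

/-- `G` is DP-degree-colorable if it is `(L,H)`-colorable whenever `|L v| ≥ deg v` for all `v`. -/
def DPDegreeColorable [Fintype V] (G : Multigraph V) : Prop :=
  ∀ (C : Type) (cov : Cover G C), (∀ v, G.deg v ≤ (cov.L v).card) → cov.Colorable

/-- The DP-chromatic number: the least `k` such that `G` is `(L,H)`-colorable for every cover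
with all lists of size at least `k`. -/
noncomputable def DPChromatic [Fintype V] (G : Multigraph V) : ℕ :=
  sInf {k | ∀ (C : Type) (cov : Cover G C), (∀ v, k ≤ (cov.L v).card) → cov.Colorable}

/-- The sub-multigraph of `G` on vertex set `A` with multiplicities `e' ≤ e_G`. -/
def subMG (G : Multigraph V) (A : Finset V) (e' : V → V → ℕ)
    (hsymm : ∀ u v, e' u v = e' v u) (hle : ∀ u v, e' u v ≤ G.e u v) :
    Multigraph {x // x ∈ A} where
  e u v := e' u v
  symm u v := hsymm u v
  loopless v := Nat.le_zero.mp (le_of_le_of_eq (hle v v) (G.loopless v))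

/-- `G` is DP-`k`-critical: `χ_DP(G) = k` and every proper sub-multigraph (obtained by deleting
vertices and/or decreasing edge multiplicities) has smaller DP-chromatic number. -/
def DPCritical [Fintype V] (G : Multigraph V) (k : ℕ) : Prop :=
  DPChromatic G = k ∧
  ∀ (A : Finset V) (e' : V → V → ℕ) (hsymm : ∀ u v, e' u v = e' v u)
    (hle : ∀ u v, e' u v ≤ G.e u v),
    (∀ u v, e' u v ≠ 0 → u ∈ A ∧ v ∈ A) →
    ¬(A = Finset.univ ∧ e' = G.e) →
    DPChromatic (subMG G A e' hsymm hle) < k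

/-- `G[B]` is connected and has no cut vertex. -/
def Nonseparable (G : Multigraph V) (B : Set V) : Prop :=
  B.Nonempty ∧ (G.induce B).toSimpleGraph.Connected ∧
    ∀ v ∈ B, (G.induce (B \ {v})).toSimpleGraph.Preconnected

/-- A block of `G`: a maximal vertex set inducing a connected sub-multigraph with no cut vertex. -/
def IsBlock (G : Multigraph V) (B : Set V) : Prop :=
  Nonseparable G B ∧ ∀ B', B ⊆ B' → Nonseparable G B' → B' = B

/-- `G` is 2-connected: connected, at least two vertices, and deleting any one vertex leaves
it connected. -/
def TwoConnected [Fintype V] (G : Multigraph V) : Prop :=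
  G.toSimpleGraph.Connected ∧ 2 ≤ Fintype.card V ∧
    ∀ v : V, (G.induce ({v}ᶜ : Set V)).toSimpleGraph.Connected

end Multigraph

/-- A simple graph is a cycle iff it is connected and every vertex has exactly two neighbors. -/
def IsCycleGraph {α : Type} (S : SimpleGraph α) : Prop :=
  S.Connected ∧ ∀ v, {u | S.Adj v u}.ncard = 2

/-- The multigraph `K_n^k`: `n` vertices, every two distinct vertices joined by `k` edges. -/
def KMG (n k : ℕ) : Multigraph (Fin n) where
  e u v := if u = v then 0 else k
  symm u v := by by_cases h : u = v <;> simp [h, eq_comm]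
  loopless v := by simp

/-- The multigraph `C_n^k`: the `n`-cycle with every edge of multiplicity `k`. -/
def CMG (n k : ℕ) : Multigraph (Fin n) where
  e u v := if u ≠ v ∧ ((u.val + 1) % n = v.val ∨ (v.val + 1) % n = u.val) then k else 0
  symm u v := by
    apply if_congr _ rfl rfl
    constructor
    · rintro ⟨h1, h2⟩; exact ⟨h1.symm, h2.symm⟩
    · rintro ⟨h1, h2⟩; exact ⟨h1.symm, h2.symm⟩
  loopless v := by simp

/-
Give every vertex `v` the `k` colors `(v, b, i)` in each of `n - 1` blocks `b`, and join any
two colors of the same block. A color then sees exactly `k` colors of each other list, so this is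
a cover of `K_n^k` with lists of size `k(n - 1)`; but a coloring would need its `n` colors in
pairwise distinct blocks.
-/

open Multigraph

namespace KMG

theorem deg_eq (n k : ℕ) (v : Fin n) : (KMG n k).deg v = k * (n - 1) := by
  simp [deg, KMG, Finset.sum_ite, Finset.filter_ne, mul_comm]

variable (n k : ℕ) (β : Type) [Fintype β]

noncomputable def blockCover : Cover (KMG n k) (Fin n × β × Fin k) where
  L v := {v} ×ˢ Finset.univ
  HAdj x y := x ≠ y ∧ (x.1 = y.1 ∨ x.2.1 = y.2.1)
  Hsymm _ _ h := ⟨h.1.symm, h.2.imp Eq.symm Eq.symm⟩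
  Hirrefl _ h := h.1 rfl
  disjoint u v huv := by
    simp only [Finset.disjoint_left, Finset.mem_product, Finset.mem_singleton]
    intro x hu hv
    exact huv (hu.1.symm.trans hv.1)
  cliques v x hx y hy hxy := by
    simp only [Finset.mem_product, Finset.mem_singleton] at hx hy
    exact ⟨hxy, Or.inl (hx.1.trans hy.1.symm)⟩
  edges_within x y _ := by
    refine ⟨x.1, y.1, by simp, by simp, ?_⟩
    by_cases hxy : x.1 = y.1
    · exact Or.inl hxy
    · exact Or.inr ⟨hxy, by simpa [KMG, hxy, Nat.one_le_iff_ne_zero] using (Fin.pos x.2.2).ne'⟩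
  matching u v huv x hx := by
    simp only [Finset.mem_product, Finset.mem_singleton] at hx
    -- the neighbors of `x` in `L v` are the colors `(v, x.2.1, i)`, determined by their index `i`
    calc _ ≤ (Finset.univ : Finset (Fin k)).card := by
          refine Finset.card_le_card_of_injOn (fun y => y.2.2) (fun _ _ => Finset.mem_univ _) ?_
          rintro y hy z hz (hyz : y.2.2 = z.2.2)
          simp only [Finset.coe_filter, Finset.mem_product, Finset.mem_singleton, hx] at hy hz
          have hyb := hy.2.2.resolve_left (Ne.symm (hy.1.1 ▸ Ne.symm huv))
          have hzb := hz.2.2.resolve_left (Ne.symm (hz.1.1 ▸ Ne.symm huv))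
          exact Prod.ext (hy.1.1.trans hz.1.1.symm) (Prod.ext (hyb.symm.trans hzb) hyz)
      _ = (KMG n k).e u v := by simp [KMG, huv]

theorem blockCover_card_L (v : Fin n) :
    ((blockCover n k β).L v).card = Fintype.card β * k := by
  simp [blockCover]

theorem blockCover_not_colorable (hβ : Fintype.card β < n) : ¬ (blockCover n k β).Colorable := by
  rintro ⟨I, -, hind, hone⟩
  have hpick (v : Fin n) : ∃ c ∈ I, c.1 = v := by
    obtain ⟨c, hcv⟩ := Finset.card_pos.mp (hone v).ge
    simp only [blockCover, Finset.mem_inter, Finset.mem_product, Finset.mem_singleton] at hcv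
    exact ⟨c, hcv.1, hcv.2.1⟩
  choose c hcI hcv using hpick
  have hblock_inj : Function.Injective fun v => (c v).2.1 := by
    intro u v huv
    by_contra hne
    exact hind _ (hcI u) _ (hcI v)
      ⟨fun h => hne (by rw [← hcv u, ← hcv v, h]), Or.inr huv⟩
  simpa using (Fintype.card_le_of_injective _ hblock_inj).trans_lt hβ

end KMG

open Multigraph in
theorem statement1_general (n k : ℕ) (hn : 1 ≤ n) :
    ¬ DPDegreeColorable (KMG n k) ∧
    ∃ (C : Type) (cov : Cover (KMG n k) C),
      (∀ v, (cov.L v).card = k * (n - 1) ∧ (cov.L v).card = (KMG n k).deg v) ∧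
      ¬ cov.Colorable := by
  have hcard (v : Fin n) : ((KMG.blockCover n k (Fin (n - 1))).L v).card = k * (n - 1) := by
    rw [KMG.blockCover_card_L, Fintype.card_fin, mul_comm]
  have hbad : ¬ (KMG.blockCover n k (Fin (n - 1))).Colorable :=
    KMG.blockCover_not_colorable n k _ (by rw [Fintype.card_fin]; omega)
  refine ⟨fun h => hbad (h _ _ fun v => ?_), _, _, fun v => ⟨hcard v, ?_⟩, hbad⟩
  all_goals rw [hcard, KMG.deg_eq]

open Multigraph in
/-- **Lemma 1.** For `n, k ≥ 1`, the multigraph `K_n^k` is not DP-degree-colorable: there is a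
cover `(L,H)` with `|L v| = k(n-1) = deg v` for every vertex `v` admitting no coloring. -/
theorem statement1 (n k : ℕ) (hn : 1 ≤ n) (hk : 1 ≤ k) :
    ¬ DPDegreeColorable (KMG n k) ∧
    ∃ (C : Type) (cov : Cover (KMG n k) C),
      (∀ v, (cov.L v).card = k * (n - 1) ∧ (cov.L v).card = (KMG n k).deg v) ∧
      ¬ cov.Colorable :=
  statement1_general n k hn
end

section
/- For all n ≥ 3 and k ≥ 1, the multigraph C_n^k is not DP-degree-colorable; that is, there exists a cover (L,H) of C_n^k with |L(v)| = 2k = deg(v) for every vertex v such that C_n^k is not (L,H)-colorable. -/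
open scoped Classical

/-!
Give every vertex `u` of the `n`-cycle two levels `s : ZMod 2` and join level `s` at `u` to level
`s + t u` at `u + 1`, where the twist `t` is `n + 1` at `0` and `0` elsewhere; blowing every level
up into `k` copies turns these matchings into `k` matchings per edge and gives lists of size
`2k = deg`. In a coloring the chosen levels satisfy `s (u + 1) = s u + t u + 1`, and summing around
the cycle gives `0 = ∑ u, (t u + 1) = 2n + 1 = 1` in `ZMod 2`.
-/

open Multigraph

theorem Equiv.Perm.sum_eq_zero_of_apply_eq_add {V A : Type*} [Fintype V] [AddCommGroup A]
    (σ : Equiv.Perm V) (s c : V → A) (h : ∀ v, s (σ v) = s v + c v) : ∑ v, c v = 0 := by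
  have hc : ∀ v, c v = s (σ v) - s v := fun v => by rw [h, add_sub_cancel_left]
  simp only [hc, Finset.sum_sub_distrib, Equiv.sum_comp, sub_self]

theorem Finset.card_le_of_forall_fst_eq {α β : Type*} [Fintype β] {s : Finset (α × β)}
    (h : ∀ x ∈ s, ∀ y ∈ s, x.1 = y.1) : s.card ≤ Fintype.card β := by
  rw [← Finset.card_univ]
  exact Finset.card_le_card_of_injOn Prod.snd (fun _ _ => Finset.mem_univ _)
    fun x hx y hy hxy => Prod.ext (h x hx y hy) hxy

theorem Multigraph.Cover.IsColoring.exists_choice {V C : Type} {G : Multigraph V}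
    {cov : Cover G C} {I : Finset C} (hI : cov.IsColoring I) :
    ∃ c : V → C, ∀ v, c v ∈ I ∧ c v ∈ cov.L v := by
  choose c hc using fun v => Finset.card_eq_one.mp (hI.2.2 v)
  exact ⟨c, fun v => Finset.mem_inter.mp (hc v ▸ Finset.mem_singleton_self (c v))⟩

theorem ZMod.eq_add_one_of_ne {a b : ZMod 2} (h : a ≠ b) : a = b + 1 := by
  revert a b; decide

namespace Fin

variable {n : ℕ} [NeZero n]

theorem val_add_one_eq_mod (u : Fin n) : (u + 1).val = (u.val + 1) % n := by
  rw [Fin.val_add, Fin.val_one', Nat.add_mod_mod]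

theorem add_one_ne_self (hn : 2 ≤ n) (u : Fin n) : u + 1 ≠ u := by
  rw [Ne, add_eq_left, Fin.ext_iff, Fin.val_one', Nat.mod_eq_of_lt hn]
  exact one_ne_zero

theorem add_one_add_one_ne_self (hn : 3 ≤ n) (u : Fin n) : u + 1 + 1 ≠ u := by
  rw [Ne, add_assoc, add_eq_left, Fin.ext_iff, Fin.val_add, Fin.val_one',
    Nat.mod_eq_of_lt (by omega : 1 < n), Nat.mod_eq_of_lt hn]
  exact two_ne_zero

end Fin

section CMG

variable {n : ℕ} [NeZero n] (k : ℕ)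

theorem CMG_e (hn : 2 ≤ n) (u v : Fin n) :
    (CMG n k).e u v = if u + 1 = v ∨ v + 1 = u then k else 0 := by
  simp only [CMG, Fin.ext_iff, Fin.val_add_one_eq_mod]
  refine if_congr ⟨And.right, fun h => ⟨?_, h⟩⟩ rfl rfl
  rintro rfl
  simp only [← Fin.val_add_one_eq_mod, ← Fin.ext_iff, or_self] at h
  exact Fin.add_one_ne_self hn u h

theorem CMG_deg (hn : 3 ≤ n) (v : Fin n) : (CMG n k).deg v = 2 * k := by
  have he : ∀ u,
      (CMG n k).e v u = (if u = v + 1 then k else 0) + (if u = v - 1 then k else 0) := by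
    intro u
    rw [CMG_e k (by omega)]
    have : v + 1 ≠ v - 1 := fun h =>
      Fin.add_one_add_one_ne_self hn (v - 1) (by rw [sub_add_cancel, ← h])
    by_cases h₁ : u = v + 1 <;> by_cases h₂ : u = v - 1 <;> simp_all [eq_comm, eq_sub_iff_add_eq]
  simp only [deg, he, Finset.sum_add_distrib, Finset.sum_ite_eq', Finset.mem_univ, if_true,
    two_mul]

end CMG

namespace CycleCover

def L (n k : ℕ) (v : Fin n) : Finset ((Fin n × ZMod 2) × Fin k) :=
  ({v} ×ˢ Finset.univ) ×ˢ Finset.univ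

@[simp]
theorem mem_L {n k : ℕ} {v : Fin n} {x : (Fin n × ZMod 2) × Fin k} :
    x ∈ L n k v ↔ x.1.1 = v := by
  simp only [L, Finset.mem_product, Finset.mem_singleton, Finset.mem_univ, and_true]

theorem card_L {n k : ℕ} (v : Fin n) : (L n k v).card = 2 * k := by
  simp [L, Finset.card_product]

variable (n k : ℕ) [NeZero n]

def twist (u : Fin n) : ZMod 2 := if u = 0 then n + 1 else 0

def next (p : Fin n × ZMod 2) : Fin n × ZMod 2 := (p.1 + 1, p.2 + twist n p.1)

def HAdj (x y : (Fin n × ZMod 2) × Fin k) : Prop :=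
  (x.1.1 = y.1.1 ∧ x ≠ y) ∨ y.1 = next n x.1 ∨ x.1 = next n y.1

variable {n k}

theorem sum_twist_add_one : ∑ u : Fin n, (twist n u + 1) = 1 := by
  simp only [twist, Finset.sum_add_distrib, Finset.sum_ite_eq', Finset.mem_univ, if_true,
    Finset.sum_const, Finset.card_univ, Fintype.card_fin, nsmul_eq_mul, mul_one]
  rw [add_right_comm, CharTwo.add_self_eq_zero, zero_add]

theorem next_injective : Function.Injective (next n) := by
  rintro ⟨u, s⟩ ⟨v, t⟩ h
  obtain rfl : u = v := add_right_cancel (congrArg Prod.fst h)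
  simpa [next] using h

theorem HAdj.irrefl (hn : 2 ≤ n) (x : (Fin n × ZMod 2) × Fin k) : ¬ HAdj n k x x := by
  rintro (⟨-, h⟩ | h | h)
  · exact h rfl
  all_goals exact Fin.add_one_ne_self hn x.1.1 (congrArg Prod.fst h).symm

theorem HAdj.add_one_eq_or {x y : (Fin n × ZMod 2) × Fin k} (h : HAdj n k x y)
    (hne : x.1.1 ≠ y.1.1) : x.1.1 + 1 = y.1.1 ∨ y.1.1 + 1 = x.1.1 := by
  rcases h with ⟨h, -⟩ | h | h
  · exact absurd h hne
  · exact Or.inl (congrArg Prod.fst h).symm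
  · exact Or.inr (congrArg Prod.fst h).symm

theorem fst_eq_of_HAdj (hn : 3 ≤ n) {x y z : (Fin n × ZMod 2) × Fin k} (hne : x.1.1 ≠ y.1.1)
    (hz : z.1.1 = y.1.1) (hxy : HAdj n k x y) (hxz : HAdj n k x z) : y.1 = z.1 := by
  have not_both : ∀ {y z : (Fin n × ZMod 2) × Fin k}, z.1.1 = y.1.1 →
      y.1 = next n x.1 → x.1 = next n z.1 → False := by
    intro y z hz hy hx
    have hxy : x.1.1 + 1 = y.1.1 := (congrArg Prod.fst hy).symm
    have hzx : z.1.1 + 1 = x.1.1 := (congrArg Prod.fst hx).symm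
    exact Fin.add_one_add_one_ne_self hn x.1.1 (by rw [hxy, ← hz, hzx])
  rcases hxy with ⟨h, -⟩ | hy | hy
  · exact absurd h hne
  all_goals rcases hxz with ⟨h, -⟩ | hz' | hz'
  · exact absurd (h.trans hz) hne
  · exact hy.trans hz'.symm
  · exact (not_both hz hy hz').elim
  · exact absurd (h.trans hz) hne
  · exact (not_both hz.symm hz' hy).elim
  · exact next_injective (hy.symm.trans hz')

variable (n k)

def cover (hn : 3 ≤ n) (hk : 1 ≤ k) : Cover (CMG n k) ((Fin n × ZMod 2) × Fin k) where
  L := L n k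
  HAdj := HAdj n k
  Hsymm x y := by
    rintro (⟨h, hne⟩ | h | h)
    exacts [Or.inl ⟨h.symm, hne.symm⟩, Or.inr (Or.inr h), Or.inr (Or.inl h)]
  Hirrefl := HAdj.irrefl (by omega)
  disjoint u v huv := Finset.disjoint_left.mpr fun x hu hv =>
    huv ((mem_L.mp hu).symm.trans (mem_L.mp hv))
  cliques v x hx y hy hxy := Or.inl ⟨(mem_L.mp hx).trans (mem_L.mp hy).symm, hxy⟩
  edges_within x y hxy := by
    refine ⟨x.1.1, y.1.1, mem_L.mpr rfl, mem_L.mpr rfl, ?_⟩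
    by_cases h : x.1.1 = y.1.1
    · exact Or.inl h
    · refine Or.inr ⟨h, ?_⟩
      rw [CMG_e k (by omega), if_pos (hxy.add_one_eq_or h)]
      exact hk
  matching u v huv x hx := by
    rw [mem_L] at hx
    subst hx
    rw [CMG_e k (by omega)]
    split_ifs with hadj
    · refine (Finset.card_le_of_forall_fst_eq fun y hy z hz => ?_).trans (Fintype.card_fin k).le
      simp only [Finset.mem_filter, mem_L] at hy hz
      exact fst_eq_of_HAdj hn (hy.1 ▸ huv) (hz.1.trans hy.1.symm) hy.2 hz.2
    · refine (Finset.card_eq_zero.mpr (Finset.filter_eq_empty_iff.mpr fun y hy hxy => ?_)).le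
      rw [mem_L] at hy
      exact hadj (hy ▸ hxy.add_one_eq_or (hy ▸ huv))

variable {n k}

theorem not_colorable_cover (hn : 3 ≤ n) (hk : 1 ≤ k) : ¬ (cover n k hn hk).Colorable := by
  rintro ⟨I, hI⟩
  obtain ⟨c, hc⟩ := hI.exists_choice
  have hvertex : ∀ v, (c v).1.1 = v := fun v => mem_L.mp (hc v).2
  have hlevel : ∀ u, (c (u + 1)).1.2 = (c u).1.2 + (twist n u + 1) := by
    intro u
    rw [← add_assoc]
    refine ZMod.eq_add_one_of_ne fun h => hI.2.1 _ (hc u).1 _ (hc (u + 1)).1 (Or.inr (Or.inl ?_))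
    exact Prod.ext (by rw [hvertex, next, hvertex]) (by rw [h, next, hvertex])
  have := (Equiv.addRight (1 : Fin n)).sum_eq_zero_of_apply_eq_add
    (fun v => (c v).1.2) (fun u => twist n u + 1) hlevel
  rw [sum_twist_add_one] at this
  exact one_ne_zero this

end CycleCover

open Multigraph in
/-- **Lemma 2.** For `n ≥ 3`, `k ≥ 1`, the multigraph `C_n^k` is not DP-degree-colorable: there
is a cover `(L,H)` with `|L v| = 2k = deg v` for every vertex `v` admitting no coloring. -/
theorem statement2 (n k : ℕ) (hn : 3 ≤ n) (hk : 1 ≤ k) :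
    ¬ DPDegreeColorable (CMG n k) ∧
    ∃ (C : Type) (cov : Cover (CMG n k) C),
      (∀ v, (cov.L v).card = 2 * k ∧ (cov.L v).card = (CMG n k).deg v) ∧
      ¬ cov.Colorable := by
  have : NeZero n := ⟨by omega⟩
  have hcard (v : Fin n) : ((CycleCover.cover n k hn hk).L v).card = (CMG n k).deg v := by
    rw [CMG_deg k hn]
    exact CycleCover.card_L v
  refine ⟨fun hDP => CycleCover.not_colorable_cover hn hk (hDP _ _ fun v => (hcard v).ge),
    _, CycleCover.cover n k hn hk, fun v => ⟨CycleCover.card_L v, hcard v⟩,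
    CycleCover.not_colorable_cover hn hk⟩
end

section
/- Let G be a regular n-vertex multigraph (all vertex degrees equal) whose underlying simple graph is a cycle on n ≥ 3 vertices. Then G is not DP-degree-colorable if and only if all edge multiplicities of G are equal, i.e., G is isomorphic to C_n^k for some k ≥ 1. -/
open scoped Classical

/-!
Label the vertices along the cycle by `f : ZMod n ≃ V`, so that the edges are `f i f (i + 1)`.

If every edge has multiplicity `k`, take `k` copies of the double cover of the cycle that is
crossed on every edge except `f 0 f 1`; its lists have size `2k = deg`. An independent
transversal would change sheet exactly once around the cycle, which is impossible.

Otherwise some edge `f (-2) f (-1)` is lighter than the next one, `f (-1) f 0`. Colour greedily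
along `f 0, f 1, …, f (-2)`: each list is larger than the multiplicity of the edge entering it.
The cycle closes at `f (-1)` if the colour `x` at `f 0` and the colour `w` at `f (-2)` leave a
colour of `L (f (-1))` free, and `w` may be chosen from any set of colours larger than the
multiplicity of the edge entering `f (-2)`. If some colour at `f 0` has fewer than
`e (f (-1)) (f 0)` neighbours in `L (f (-1))`, it serves as `x`. Otherwise close at `f 0`
instead, starting from any colour `x'` at `f 1`: if `x'` has a neighbour `z` in `L (f 0)`, the
at least `e (f (-1)) (f 0)` neighbours of `z` in `L (f (-1))` are admissible choices of `w`.
-/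

lemma ZMod.sub_one_ne_add_one {n : ℕ} (hn : 3 ≤ n) (i : ZMod n) : i - 1 ≠ i + 1 := by
  intro h
  have h2 : ((2 : ℕ) : ZMod n) = 0 := by push_cast; linear_combination -h
  rw [ZMod.natCast_eq_zero_iff] at h2
  exact absurd (Nat.le_of_dvd two_pos h2) (by omega)

lemma ZMod.apply_le_of_forall_apply_add_one_le {n : ℕ} [NeZero n] {α : Type*} [Preorder α]
    {m : ZMod n → α} (h : ∀ i, m (i + 1) ≤ m i) (i j : ZMod n) : m j ≤ m i := by
  have hsteps (t : ℕ) : m (i + t) ≤ m i := by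
    induction t with
    | zero => simp
    | succ t ih =>
      calc m (i + (t + 1 : ℕ)) = m (i + t + 1) := by push_cast; ring_nf
        _ ≤ m (i + t) := h _
        _ ≤ m i := ih
  simpa using hsteps (j - i).val

lemma exists_greedy_chain {C : Type*} (R : C → C → Prop) (S : ℕ → C → Prop) (N : ℕ)
    (hstep : ∀ t < N, ∀ y, S t y → ∃ y', S (t + 1) y' ∧ ¬ R y y') {x : C} (hx : S 0 x) :
    ∃ c : ℕ → C, c 0 = x ∧ (∀ t ≤ N, S t (c t)) ∧
      ∀ t < N, ¬ R (c t) (c (t + 1)) := by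
  induction N with
  | zero => exact ⟨fun _ => x, rfl, fun t ht => by rwa [Nat.le_zero.1 ht], by simp⟩
  | succ N ih =>
    obtain ⟨c, hc0, hS, hR⟩ := ih fun t ht => hstep t (by omega)
    obtain ⟨y, hy, hRy⟩ := hstep N (by omega) (c N) (hS N le_rfl)
    refine ⟨Function.update c (N + 1) y, by simp [hc0], fun t ht => ?_, fun t ht => ?_⟩
    · rcases ht.lt_or_eq with ht | rfl
      · rw [Function.update_of_ne (by omega)]
        exact hS t (by omega)
      · rwa [Function.update_self]
    · rcases (Nat.lt_succ_iff.1 ht).lt_or_eq with ht | rfl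
      · rw [Function.update_of_ne (by omega), Function.update_of_ne (by omega)]
        exact hR t ht
      · rwa [Function.update_self, Function.update_of_ne (by omega)]

namespace Multigraph

variable {V : Type} {G : Multigraph V}

lemma Adj.symm {u v : V} (h : G.Adj u v) : G.Adj v u := ⟨h.1.symm, G.symm u v ▸ h.2⟩

def IsCycleLabeling (G : Multigraph V) {n : ℕ} (f : ZMod n ≃ V) : Prop :=
  ∀ i j, G.Adj (f i) (f j) ↔ j = i + 1 ∨ i = j + 1

namespace IsCycleLabeling

variable {n : ℕ} {f : ZMod n ≃ V}

lemma adj_add_one (hf : IsCycleLabeling G f) (i : ZMod n) : G.Adj (f i) (f (i + 1)) :=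
  (hf i (i + 1)).2 (Or.inl rfl)

lemma ne_of_eq_add_one (hf : IsCycleLabeling G f) {i j : ZMod n} (h : j = i + 1) : f i ≠ f j :=
  h ▸ (hf.adj_add_one i).1

lemma one_le_e (hf : IsCycleLabeling G f) (i : ZMod n) : 1 ≤ G.e (f i) (f (i + 1)) :=
  (hf.adj_add_one i).2

lemma addRight (hf : IsCycleLabeling G f) (c : ZMod n) :
    IsCycleLabeling G ((Equiv.addRight c).trans f) := by
  intro i j
  simp only [Equiv.trans_apply, Equiv.coe_addRight]
  rw [hf]
  constructor <;> rintro (h | h) <;> [left; right; left; right] <;> linear_combination h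

end IsCycleLabeling

lemma isCycleLabeling_of_adj_add_one {n : ℕ} (hn : 3 ≤ n) {f : ZMod n ≃ V}
    (hdeg : ∀ v, {u | G.toSimpleGraph.Adj v u}.ncard = 2)
    (hadj : ∀ i, G.Adj (f i) (f (i + 1))) : IsCycleLabeling G f := by
  intro i j
  refine ⟨fun h => ?_, ?_⟩
  · have hsub : {f (i + 1), f (i - 1)} ⊆ {u | G.toSimpleGraph.Adj (f i) u} := by
      rintro u (rfl | rfl)
      · exact hadj i
      · have := (hadj (i - 1)).symm
        rwa [sub_add_cancel] at this
    have hne : f (i + 1) ≠ f (i - 1) := fun h => ZMod.sub_one_ne_add_one hn i (f.injective h).symm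
    have heq := Set.eq_of_subset_of_ncard_le hsub (by rw [hdeg, Set.ncard_pair hne])
      (Set.finite_of_ncard_ne_zero (by rw [hdeg]; norm_num))
    have hj : f j ∈ ({f (i + 1), f (i - 1)} : Set V) := heq ▸ h
    rcases hj with hj | hj
    · exact Or.inl (f.injective hj)
    · exact Or.inr (by rw [f.injective hj]; ring)
  · rintro (rfl | rfl)
    · exact hadj i
    · exact (hadj j).symm

lemma exists_isCycleLabeling [Fintype V] (hn : 3 ≤ Fintype.card V)
    (hcyc : IsCycleGraph G.toSimpleGraph) :
    ∃ f : ZMod (Fintype.card V) ≃ V, IsCycleLabeling G f := by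
  obtain ⟨hconn, hdeg⟩ := hcyc
  obtain ⟨v⟩ := hconn.nonempty
  obtain ⟨p, hp, hverts⟩ :=
    SimpleGraph.IsCycles.exists_cycle_toSubgraph_verts_eq_connectedComponentSupp
      (fun w _ => hdeg w) (c := G.toSimpleGraph.connectedComponentMk v) rfl
      (Set.nonempty_of_ncard_ne_zero (by simp [SimpleGraph.neighborSet, hdeg v]))
  have hsupp (w : V) : w ∈ p.support := by
    rw [← p.mem_verts_toSubgraph, hverts, SimpleGraph.ConnectedComponent.mem_supp_iff,
      SimpleGraph.ConnectedComponent.eq]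
    exact hconn.preconnected w v
  have hlen : p.length = Fintype.card V := by
    refine (SimpleGraph.Walk.isHamiltonianCycle_iff_isCycle_and_support_count_tail_eq_one.mpr
      ⟨hp, fun w => List.count_eq_one_of_mem hp.support_nodup ?_⟩).length_eq
    rcases List.mem_cons.mp (p.cons_tail_support ▸ hsupp w) with rfl | h
    · exact SimpleGraph.Walk.end_mem_tail_support hp.not_nil
    · exact h
  set n := Fintype.card V
  have : NeZero n := ⟨by omega⟩
  have hmod (k : ℕ) (hk : k ≤ n) : p.getVert (k % n) = p.getVert k := by
    rcases hk.lt_or_eq with hk | rfl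
    · rw [Nat.mod_eq_of_lt hk]
    · rw [Nat.mod_self, SimpleGraph.Walk.getVert_zero, ← hlen, p.getVert_length]
  let g : ZMod n → V := fun i => p.getVert i.val
  have hg : Function.Injective g := fun i j h => by
    have hi := i.val_lt
    have hj := j.val_lt
    exact ZMod.val_injective n (hp.getVert_injOn' (by rw [Set.mem_ofPred_eq]; omega)
      (by rw [Set.mem_ofPred_eq]; omega) h)
  refine ⟨Equiv.ofBijective g ((Fintype.bijective_iff_injective_and_card g).mpr
    ⟨hg, ZMod.card n⟩), isCycleLabeling_of_adj_add_one hn hdeg fun i => ?_⟩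
  have hi : i + 1 = ((i.val + 1 : ℕ) : ZMod n) := by push_cast; rw [ZMod.natCast_zmod_val]
  change G.toSimpleGraph.Adj (p.getVert i.val) (p.getVert (i + 1).val)
  rw [hi, ZMod.val_natCast, hmod _ i.val_lt]
  exact p.adj_getVert_succ (hlen.symm ▸ i.val_lt)

lemma IsCycleLabeling.deg_eq [Fintype V] {n : ℕ} {f : ZMod n ≃ V} (hf : IsCycleLabeling G f)
    (hn : 3 ≤ n) (i : ZMod n) :
    G.deg (f i) = G.e (f (i - 1)) (f i) + G.e (f i) (f (i + 1)) := by
  have hne : f (i - 1) ≠ f (i + 1) := fun h => ZMod.sub_one_ne_add_one hn i (f.injective h)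
  rw [deg, Fintype.sum_eq_add _ _ hne, G.symm (f i)]
  rintro u ⟨hu₁, hu₂⟩
  by_contra hu
  obtain ⟨j, rfl⟩ := f.surjective u
  have hij : f i ≠ f j := fun h => hu (h ▸ G.loopless _)
  rcases (hf i j).1 ⟨hij, Nat.one_le_iff_ne_zero.2 hu⟩ with rfl | rfl
  · exact hu₂ rfl
  · exact hu₁ (by rw [add_sub_cancel_right])

namespace Cover
variable {C : Type} (cov : Cover G C)

noncomputable def nbrs (x : C) (v : V) : Finset C := (cov.L v).filter (cov.HAdj x)

lemma card_nbrs_le {x : C} {u v : V} (hx : x ∈ cov.L u) (huv : u ≠ v) :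
    (cov.nbrs x v).card ≤ G.e u v :=
  cov.matching u v huv x hx

lemma eq_of_mem_L {x : C} {u v : V} (hu : x ∈ cov.L u) (hv : x ∈ cov.L v) : u = v :=
  by_contra fun h => Finset.disjoint_left.mp (cov.disjoint u v h) hu hv

lemma exists_mem_not_hAdj {x : C} {v : V} {S : Finset C}
    (hS : S ⊆ cov.L v) (h : (cov.nbrs x v).card < S.card) : ∃ y ∈ S, ¬ cov.HAdj x y := by
  have hle : (S.filter (cov.HAdj x)).card ≤ (cov.nbrs x v).card :=
    Finset.card_le_card (Finset.filter_subset_filter _ hS)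
  obtain ⟨y, hy, hyn⟩ := Finset.exists_mem_notMem_of_card_lt_card (hle.trans_lt h)
  exact ⟨y, hy, fun h => hyn (Finset.mem_filter.2 ⟨hy, h⟩)⟩

lemma exists_not_hAdj_of_card_lt {x w : C} {v : V}
    (h : (cov.nbrs x v ∪ cov.nbrs w v).card < (cov.L v).card) :
    ∃ y ∈ cov.L v, ¬ cov.HAdj x y ∧ ¬ cov.HAdj w y := by
  obtain ⟨y, hy, hyn⟩ := Finset.exists_mem_notMem_of_card_lt_card h
  exact ⟨y, hy, fun h => hyn (by simp [nbrs, hy, h]), fun h => hyn (by simp [nbrs, hy, h])⟩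

lemma colorable_of_forall_adj [Fintype V] (c : V → C) (hc : ∀ v, c v ∈ cov.L v)
    (hadj : ∀ u v, G.Adj u v → ¬ cov.HAdj (c u) (c v)) : cov.Colorable := by
  refine ⟨Finset.univ.image c, ?_, ?_, fun v => ?_⟩
  · simp only [Finset.mem_image, Finset.mem_univ, true_and, forall_exists_index,
      forall_apply_eq_imp_iff]
    exact fun v => ⟨v, hc v⟩
  · simp only [Finset.mem_image, Finset.mem_univ, true_and, forall_exists_index,
      forall_apply_eq_imp_iff]
    intro u v h
    obtain ⟨u', v', hu', hv', huv⟩ := cov.edges_within _ _ h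
    obtain rfl := cov.eq_of_mem_L (hc u) hu'
    obtain rfl := cov.eq_of_mem_L (hc v) hv'
    rcases huv with rfl | huv
    · exact cov.Hirrefl _ h
    · exact hadj u v huv h
  · rw [Finset.card_eq_one]
    refine ⟨c v, Finset.eq_singleton_iff_unique_mem.2 ⟨by simp [hc v], ?_⟩⟩
    simp only [Finset.mem_inter, Finset.mem_image, Finset.mem_univ, true_and, and_imp,
      forall_exists_index, forall_apply_eq_imp_iff]
    intro u hu
    rw [cov.eq_of_mem_L (hc u) hu]

lemma IsColoring.exists_mem {I : Finset C} (hI : cov.IsColoring I) (v : V) :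
    ∃ c ∈ I, c ∈ cov.L v := by
  obtain ⟨c, hc⟩ := Finset.card_pos.1 (hI.2.2 v ▸ Nat.one_pos)
  exact ⟨c, Finset.mem_inter.1 hc⟩

end Cover

namespace IsCycleLabeling
variable [Fintype V] {n : ℕ} {f : ZMod n ≃ V} {C : Type} (cov : Cover G C)

lemma colorable_of_forall_not_hAdj (hf : IsCycleLabeling G f) (c : ZMod n → C)
    (hc : ∀ i, c i ∈ cov.L (f i)) (hsucc : ∀ i, ¬ cov.HAdj (c i) (c (i + 1))) :
    cov.Colorable := by
  refine cov.colorable_of_forall_adj (c ∘ f.symm) (fun v => by simpa using hc (f.symm v))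
    fun u v huv => ?_
  obtain ⟨i, rfl⟩ := f.surjective u
  obtain ⟨j, rfl⟩ := f.surjective v
  simp only [Function.comp_apply, Equiv.symm_apply_apply]
  rcases (hf i j).1 huv with rfl | rfl
  · exact hsucc i
  · exact fun h => hsucc j (cov.Hsymm _ _ h)

lemma colorable_of_nat_chain [NeZero n] (hf : IsCycleLabeling G f) (c : ℕ → C)
    (hc : ∀ t < n, c t ∈ cov.L (f t))
    (hsucc : ∀ t, t + 1 < n → ¬ cov.HAdj (c t) (c (t + 1)))
    (hwrap : ¬ cov.HAdj (c (n - 1)) (c 0)) : cov.Colorable := by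
  refine hf.colorable_of_forall_not_hAdj cov (fun i => c i.val)
    (fun i => by simpa using hc i.val i.val_lt) fun i => ?_
  obtain ⟨t, ht, rfl⟩ : ∃ t < n, (t : ZMod n) = i := ⟨i.val, i.val_lt, by simp⟩
  rcases (Nat.succ_le_of_lt ht).lt_or_eq with ht' | ht'
  · rw [← Nat.cast_succ, ZMod.val_cast_of_lt ht, ZMod.val_cast_of_lt ht']
    exact hsucc t ht'
  · have h0 : (t : ZMod n) + 1 = 0 := by rw [← Nat.cast_succ, ht', ZMod.natCast_self]
    rwa [h0, ZMod.val_zero, ZMod.val_cast_of_lt ht, show t = n - 1 by omega]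

variable {cov}

lemma add_le_card (hf : IsCycleLabeling G f) (hn : 3 ≤ n)
    (hL : ∀ v, G.deg v ≤ (cov.L v).card) (i : ZMod n) :
    G.e (f (i - 1)) (f i) + G.e (f i) (f (i + 1)) ≤ (cov.L (f i)).card :=
  hf.deg_eq hn i ▸ hL _

lemma e_lt_card (hf : IsCycleLabeling G f) (hn : 3 ≤ n)
    (hL : ∀ v, G.deg v ≤ (cov.L v).card) (i : ZMod n) :
    G.e (f i) (f (i + 1)) < (cov.L (f (i + 1))).card := by
  have := hf.add_le_card hn hL (i + 1)
  have := hf.one_le_e (i + 1)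
  rw [add_sub_cancel_right] at *
  omega

lemma colorable_of_closing_set (hf : IsCycleLabeling G f) (hn : 3 ≤ n)
    (hL : ∀ v, G.deg v ≤ (cov.L v).card) {x : C} (hx : x ∈ cov.L (f 0))
    {P : Finset C} (hP : P ⊆ cov.L (f (-2))) (hPcard : G.e (f (-3)) (f (-2)) < P.card)
    (hclose : ∀ w ∈ P, ∃ y ∈ cov.L (f (-1)), ¬ cov.HAdj x y ∧ ¬ cov.HAdj w y) :
    cov.Colorable := by
  have : NeZero n := ⟨by omega⟩
  have hcast (t k : ℕ) (ht : t + k = n) : (t : ZMod n) = -k := by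
    rw [eq_neg_iff_add_eq_zero, ← Nat.cast_add, ht, ZMod.natCast_self]
  -- admissible colours at step `t` of the walk `f 0, f 1, …, f (n - 1) = f (-1)`
  let S (t : ℕ) (y : C) : Prop :=
    y ∈ cov.L (f t) ∧ (t = n - 2 → y ∈ P) ∧ (t = n - 1 → ¬ cov.HAdj x y)
  have hstep : ∀ t < n - 1, ∀ y, S t y → ∃ y', S (t + 1) y' ∧ ¬ cov.HAdj y y' := by
    rintro t ht y ⟨hyL, hyP, -⟩
    rcases lt_trichotomy (t + 1) (n - 2) with h | h | h
    · have hlt := (cov.card_nbrs_le hyL (hf.adj_add_one t).1).trans_lt (hf.e_lt_card hn hL t)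
      obtain ⟨y', hy', hny'⟩ := cov.exists_mem_not_hAdj subset_rfl hlt
      exact ⟨y', ⟨by simpa using hy', by omega, by omega⟩, hny'⟩
    · have h3 : (t : ZMod n) = -3 := hcast t 3 (by omega)
      have h2 : ((t + 1 : ℕ) : ZMod n) = -2 := hcast (t + 1) 2 (by omega)
      rw [h3] at hyL
      obtain ⟨y', hy', hny'⟩ := cov.exists_mem_not_hAdj hP
        ((cov.card_nbrs_le hyL (hf.ne_of_eq_add_one (by ring))).trans_lt hPcard)
      exact ⟨y', ⟨h2 ▸ hP hy', fun _ => hy', by omega⟩, hny'⟩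
    · have h1 : ((t + 1 : ℕ) : ZMod n) = -1 := by simpa using hcast (t + 1) 1 (by omega)
      obtain ⟨y', hy', hxy', hyy'⟩ := hclose y (hyP (by omega))
      exact ⟨y', ⟨h1 ▸ hy', by omega, fun _ => hxy'⟩, hyy'⟩
  obtain ⟨c, hc0, hS, hR⟩ := exists_greedy_chain cov.HAdj S (n - 1) hstep (x := x)
    ⟨by simpa using hx, by omega, by omega⟩
  refine hf.colorable_of_nat_chain cov c (fun t ht => (hS t (by omega)).1)
    (fun t ht => hR t (by omega)) fun h => ?_
  exact (hS (n - 1) le_rfl).2.2 rfl (hc0 ▸ cov.Hsymm _ _ h)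

lemma colorable_of_exists_card_nbrs_lt (hf : IsCycleLabeling G f) (hn : 3 ≤ n)
    (hL : ∀ v, G.deg v ≤ (cov.L v).card)
    (hdef : ∃ z ∈ cov.L (f 0), (cov.nbrs z (f (-1))).card < G.e (f (-1)) (f 0)) :
    cov.Colorable := by
  obtain ⟨z, hz, hzq⟩ := hdef
  have hL₁ : G.e (f (-2)) (f (-1)) + G.e (f (-1)) (f 0) ≤ (cov.L (f (-1))).card := by
    simpa [show (-1 : ZMod n) - 1 = -2 by ring] using hf.add_le_card hn hL (-1)
  refine hf.colorable_of_closing_set hn hL hz subset_rfl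
    (by simpa [show (-3 : ZMod n) + 1 = -2 by ring] using hf.e_lt_card hn hL (-3))
    fun w hw => cov.exists_not_hAdj_of_card_lt ?_
  have : (cov.nbrs w (f (-1))).card ≤ G.e (f (-2)) (f (-1)) :=
    cov.card_nbrs_le hw (hf.ne_of_eq_add_one (by ring))
  calc _ ≤ (cov.nbrs z (f (-1))).card + (cov.nbrs w (f (-1))).card := Finset.card_union_le _ _
    _ < _ := by omega

lemma colorable_of_forall_le_card_nbrs (hf : IsCycleLabeling G f) (hn : 3 ≤ n)
    (hL : ∀ v, G.deg v ≤ (cov.L v).card)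
    (hlt : G.e (f (-2)) (f (-1)) < G.e (f (-1)) (f 0))
    (hfull : ∀ z ∈ cov.L (f 0), G.e (f (-1)) (f 0) ≤ (cov.nbrs z (f (-1))).card) :
    cov.Colorable := by
  have hL₀ : G.e (f (-1)) (f 0) + G.e (f 0) (f 1) ≤ (cov.L (f 0)).card := by
    simpa using hf.add_le_card hn hL 0
  have hr : 1 ≤ G.e (f 0) (f 1) := by simpa using hf.one_le_e 0
  obtain ⟨x, hx⟩ : (cov.L (f 1)).Nonempty :=
    Finset.card_pos.1 (by simpa using (hf.e_lt_card hn hL 0).trans_le' (Nat.zero_le _))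
  have hA : (cov.nbrs x (f 0)).card ≤ G.e (f 0) (f 1) :=
    G.symm (f 0) (f 1) ▸ cov.card_nbrs_le hx (hf.ne_of_eq_add_one (by ring)).symm
  suffices ∃ P ⊆ cov.L (f (-1)), G.e (f (-2)) (f (-1)) < P.card ∧
      ∀ w ∈ P, ∃ y ∈ cov.L (f 0), ¬ cov.HAdj x y ∧ ¬ cov.HAdj w y by
    obtain ⟨P, hP, hPcard, hclose⟩ := this
    refine (hf.addRight 1).colorable_of_closing_set hn hL (x := x) (P := P) ?_ ?_ ?_ ?_ <;>
      simp only [Equiv.trans_apply, Equiv.coe_addRight, zero_add,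
        show (-2 : ZMod n) + 1 = -1 by ring, show (-3 : ZMod n) + 1 = -2 by ring, neg_add_cancel]
    exacts [hx, hP, hPcard, hclose]
  rcases (cov.nbrs x (f 0)).eq_empty_or_nonempty with hA0 | ⟨z, hz⟩
  · refine ⟨cov.L (f (-1)), subset_rfl, ?_, fun w hw => cov.exists_not_hAdj_of_card_lt ?_⟩
    · simpa [show (-2 : ZMod n) + 1 = -1 by ring] using hf.e_lt_card hn hL (-2)
    · have : (cov.nbrs w (f 0)).card ≤ G.e (f (-1)) (f 0) :=
        cov.card_nbrs_le hw (hf.ne_of_eq_add_one (by ring))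
      rw [hA0, Finset.empty_union]
      omega
  · have hzL : z ∈ cov.L (f 0) := (Finset.mem_filter.1 hz).1
    refine ⟨cov.nbrs z (f (-1)), Finset.filter_subset _ _, hlt.trans_le (hfull z hzL),
      fun w hw => cov.exists_not_hAdj_of_card_lt ?_⟩
    obtain ⟨hwL, hzw⟩ := Finset.mem_filter.1 hw
    have hzw' : z ∈ cov.nbrs w (f 0) := Finset.mem_filter.2 ⟨hzL, cov.Hsymm _ _ hzw⟩
    have hcommon : 0 < (cov.nbrs x (f 0) ∩ cov.nbrs w (f 0)).card :=
      Finset.card_pos.2 ⟨z, Finset.mem_inter.2 ⟨hz, hzw'⟩⟩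
    have := Finset.card_union_add_card_inter (cov.nbrs x (f 0)) (cov.nbrs w (f 0))
    have : (cov.nbrs w (f 0)).card ≤ G.e (f (-1)) (f 0) :=
      cov.card_nbrs_le hwL (hf.ne_of_eq_add_one (by ring))
    omega

lemma colorable_of_lt (hf : IsCycleLabeling G f) (hn : 3 ≤ n)
    (hL : ∀ v, G.deg v ≤ (cov.L v).card)
    (hlt : G.e (f (-2)) (f (-1)) < G.e (f (-1)) (f 0)) : cov.Colorable := by
  by_cases hdef : ∃ z ∈ cov.L (f 0), (cov.nbrs z (f (-1))).card < G.e (f (-1)) (f 0)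
  · exact hf.colorable_of_exists_card_nbrs_lt hn hL hdef
  · push Not at hdef
    exact hf.colorable_of_forall_le_card_nbrs hn hL hlt hdef

end IsCycleLabeling

noncomputable def twistedCover (G : Multigraph V) (e₀ : Sym2 V) (k : ℕ)
    (hk : ∀ u v, G.Adj u v → G.e u v = k) : Cover G (V × ZMod 2 × Fin k) where
  L v := {v} ×ˢ Finset.univ
  HAdj x y := (x.1 = y.1 ∧ x ≠ y) ∨
    (G.Adj x.1 y.1 ∧ y.2.1 = x.2.1 + if s(x.1, y.1) = e₀ then 0 else 1)
  Hsymm x y := by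
    have hflip : ∀ a b c : ZMod 2, b = a + c → a = b + c := by decide
    rintro (⟨h, hne⟩ | ⟨hadj, h⟩)
    · exact Or.inl ⟨h.symm, hne.symm⟩
    · exact Or.inr ⟨hadj.symm, Sym2.eq_swap (a := x.1) ▸ hflip _ _ _ h⟩
  Hirrefl x := by rintro (⟨-, h⟩ | ⟨h, -⟩) <;> [exact h rfl; exact h.1 rfl]
  disjoint u v huv := by
    simp only [Finset.disjoint_left, Finset.mem_product, Finset.mem_singleton]
    exact fun x hu hv => huv (hu.1.symm.trans hv.1)
  cliques v x hx y hy hxy := by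
    simp only [Finset.mem_product, Finset.mem_singleton] at hx hy
    exact Or.inl ⟨hx.1.trans hy.1.symm, hxy⟩
  edges_within x y h := ⟨x.1, y.1, by simp, by simp, h.imp (·.1) (·.1)⟩
  matching u v huv x hx := by
    simp only [Finset.mem_product, Finset.mem_singleton] at hx
    by_cases hadj : G.Adj u v
    · rw [hk u v hadj]
      calc _ ≤ ({v} ×ˢ {x.2.1 + if s(u, v) = e₀ then 0 else 1} ×ˢ Finset.univ :
            Finset (V × ZMod 2 × Fin k)).card := by
            refine Finset.card_le_card fun y hy => ?_
            simp only [Finset.mem_filter, Finset.mem_product, Finset.mem_singleton] at hy ⊢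
            obtain ⟨⟨hyv, -⟩, ⟨hxy, -⟩ | ⟨-, hy⟩⟩ := hy
            · exact absurd (hx.1.symm.trans (hxy.trans hyv)) huv
            · exact ⟨hyv, by rw [hy, hx.1, hyv], Finset.mem_univ _⟩
        _ = k := by simp
    · convert Nat.zero_le _
      refine Finset.card_eq_zero.2 (Finset.eq_empty_of_forall_notMem fun y hy => ?_)
      simp only [Finset.mem_filter, Finset.mem_product, Finset.mem_singleton] at hy
      obtain ⟨hy, ⟨hxy, -⟩ | ⟨hxy, -⟩⟩ := hy
      · exact huv (hx.1.symm.trans (hxy.trans hy.1))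
      · exact hadj (hx.1 ▸ hy.1 ▸ hxy)

namespace IsCycleLabeling
variable {n : ℕ} {f : ZMod n ≃ V}

lemma not_colorable_twistedCover (hf : IsCycleLabeling G f) (hn : 3 ≤ n) {k : ℕ}
    (hk : ∀ u v, G.Adj u v → G.e u v = k) :
    ¬ (twistedCover G s(f 0, f 1) k hk).Colorable := by
  rintro ⟨I, hI⟩
  have : NeZero n := ⟨by omega⟩
  choose c hcI hcL using hI.exists_mem
  have hc1 (v : V) : (c v).1 = v := Finset.mem_singleton.1 (Finset.mem_product.1 (hcL v)).1
  have hedge (i : ZMod n) : s(f i, f (i + 1)) = s(f 0, f 1) ↔ i = 0 := by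
    refine ⟨fun h => ?_, by rintro rfl; simp⟩
    rcases Sym2.eq_iff.1 h with ⟨h0, -⟩ | ⟨h1, h0⟩
    · exact f.injective h0
    · obtain rfl := f.injective h1
      exact absurd (by simpa using (f.injective h0).symm) (ZMod.sub_one_ne_add_one hn 1)
  let s (i : ZMod n) : ZMod 2 := (c (f i)).2.1
  have hs (i : ZMod n) : s (i + 1) - s i = if i = 0 then 1 else 0 := by
    have hne : s (i + 1) ≠ s i + if i = 0 then 0 else 1 := fun h =>
      hI.2.1 _ (hcI (f i)) _ (hcI (f (i + 1))) <| Or.inr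
        ⟨by rw [hc1, hc1]; exact hf.adj_add_one i,
          by rw [hc1, hc1, if_congr (hedge i) rfl rfl]; exact h⟩
    split_ifs at hne ⊢ <;> revert hne <;> generalize s (i + 1) = a <;> generalize s i = b <;>
      decide +revert
  have hsum : ∑ i, (s (i + 1) - s i) = 0 := by
    rw [Finset.sum_sub_distrib, sub_eq_zero]
    exact Fintype.sum_equiv (Equiv.addRight 1) _ _ fun _ => rfl
  simp [hs] at hsum

lemma not_dpDegreeColorable [Fintype V] (hf : IsCycleLabeling G f) (hn : 3 ≤ n) {k : ℕ}
    (hk : ∀ u v, G.Adj u v → G.e u v = k) : ¬ G.DPDegreeColorable := fun h =>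
  hf.not_colorable_twistedCover hn hk <| h _ _ fun v => by
    obtain ⟨i, rfl⟩ := f.surjective v
    rw [hf.deg_eq hn i, hk _ _ (by simpa using hf.adj_add_one (i - 1)), hk _ _ (hf.adj_add_one i)]
    simp [twistedCover]
    omega

end IsCycleLabeling

end Multigraph

open Multigraph in
theorem statement3_general {V : Type} [Fintype V] (G : Multigraph V) (hn : 3 ≤ Fintype.card V)
    (hcyc : IsCycleGraph G.toSimpleGraph) :
    ¬ DPDegreeColorable G ↔ ∃ k ≥ 1, ∀ u v : V, G.Adj u v → G.e u v = k := by
  obtain ⟨f, hf⟩ := exists_isCycleLabeling hn hcyc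
  have : NeZero (Fintype.card V) := ⟨by omega⟩
  refine ⟨fun hnot => ?_, fun ⟨k, _, hk⟩ => hf.not_dpDegreeColorable hn hk⟩
  let m (i : ZMod (Fintype.card V)) : ℕ := G.e (f i) (f (i + 1))
  have hm (i : ZMod (Fintype.card V)) : m (i + 1) ≤ m i := by
    by_contra! hlt
    refine hnot fun C cov hL => (hf.addRight (i + 2)).colorable_of_lt hn hL ?_
    simp only [Equiv.trans_apply, Equiv.coe_addRight]
    rwa [show -2 + (i + 2) = i by ring, show -1 + (i + 2) = i + 1 by ring,
      show 0 + (i + 2) = i + 1 + 1 by ring]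
  have hconst (i : ZMod (Fintype.card V)) : m i = m 0 :=
    (ZMod.apply_le_of_forall_apply_add_one_le hm 0 i).antisymm
      (ZMod.apply_le_of_forall_apply_add_one_le hm i 0)
  refine ⟨m 0, hf.one_le_e 0, fun u v huv => ?_⟩
  obtain ⟨i, rfl⟩ := f.surjective u
  obtain ⟨j, rfl⟩ := f.surjective v
  rcases (hf i j).1 huv with rfl | rfl
  · exact hconst i
  · rw [G.symm]
    exact hconst j

open Multigraph in
/-- **Lemma (cycle).** Let `G` be a regular multigraph on `n ≥ 3` vertices whose underlying
simple graph is a cycle. Then `G` is not DP-degree-colorable iff all edge multiplicities of `G`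
are equal, i.e. `G ≅ C_n^k` for some `k ≥ 1`. -/
theorem statement3 {V : Type} [Fintype V] (G : Multigraph V) (hn : 3 ≤ Fintype.card V)
    (hreg : ∀ u v : V, G.deg u = G.deg v)
    (hcyc : IsCycleGraph G.toSimpleGraph) :
    ¬ DPDegreeColorable G ↔ ∃ k ≥ 1, ∀ u v : V, G.Adj u v → G.e u v = k :=
  statement3_general G hn hcyc
end

section
/- Let G be a connected multigraph and let (L,H) be a cover of G such that |L(v)| ≥ deg_G(v) for all vertices v, and |L(v₀)| > deg_G(v₀) for some vertex v₀. Then G is (L,H)-colorable. -/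
open scoped Classical

/-
Color greedily, farthest vertices from `v₀` first and `v₀` last. When a vertex `w ≠ v₀` is
colored, its neighbor on a shortest path to `v₀` is still uncolored, so the colored neighbors
of `w` forbid fewer than `deg w ≤ |L w|` colors of `L w`: each colored `v` forbids at most
`e(v, w)` of them. The last vertex `v₀` has no uncolored neighbor left, but it has a spare color.
-/

namespace Multigraph

variable {V C : Type}

theorem sum_e_lt_deg [Fintype V] (G : Multigraph V) {S : Finset V} {w u : V} (hu : u ∉ S)
    (hadj : G.Adj w u) : ∑ v ∈ S, G.e w v < G.deg w := by
  calc ∑ v ∈ S, G.e w v ≤ ∑ v ∈ Finset.univ.erase u, G.e w v :=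
        Finset.sum_le_sum_of_subset fun v hv =>
          Finset.mem_erase.2 ⟨ne_of_mem_of_not_mem hv hu, Finset.mem_univ v⟩
    _ < G.deg w := by
        rw [deg, ← Finset.sum_erase_add _ _ (Finset.mem_univ u)]
        have := hadj.2
        omega

namespace Cover

variable {G : Multigraph V}

def IsPartialColoring (cov : Cover G C) (S : Finset V) (I : Finset C) : Prop :=
  (∀ x ∈ I, ∃ v ∈ S, x ∈ cov.L v) ∧
  (∀ x ∈ I, ∀ y ∈ I, ¬ cov.HAdj x y) ∧
  (∀ v ∈ S, (I ∩ cov.L v).card = 1)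

theorem isPartialColoring_empty (cov : Cover G C) : cov.IsPartialColoring ∅ ∅ := by
  simp [IsPartialColoring]

theorem IsPartialColoring.isColoring [Fintype V] {cov : Cover G C} {I : Finset C}
    (hI : cov.IsPartialColoring Finset.univ I) : cov.IsColoring I :=
  ⟨fun x hx => (hI.1 x hx).imp fun _ h => h.2, hI.2.1, fun v => hI.2.2 v (Finset.mem_univ v)⟩

theorem IsPartialColoring.inter_eq_empty {cov : Cover G C} {S : Finset V} {I : Finset C}
    (hI : cov.IsPartialColoring S I) {w : V} (hw : w ∉ S) : I ∩ cov.L w = ∅ := by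
  refine Finset.eq_empty_of_forall_notMem fun x hx => ?_
  obtain ⟨v, hv, hxv⟩ := hI.1 x (Finset.mem_inter.1 hx).1
  exact Finset.disjoint_left.1 (cov.disjoint v w (ne_of_mem_of_not_mem hv hw)) hxv
    (Finset.mem_inter.1 hx).2

theorem IsPartialColoring.extend {cov : Cover G C} {S : Finset V} {I : Finset C}
    (hI : cov.IsPartialColoring S I) {w : V} (hw : w ∉ S) {y : C} (hy : y ∈ cov.L w)
    (hfree : ∀ x ∈ I, ¬ cov.HAdj x y) :
    cov.IsPartialColoring (insert w S) (insert y I) := by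
  refine ⟨?_, ?_, ?_⟩
  · simp only [Finset.mem_insert, forall_eq_or_imp, exists_eq_or_imp]
    exact ⟨Or.inl hy, fun x hx => Or.inr (hI.1 x hx)⟩
  · simp only [Finset.mem_insert, forall_eq_or_imp]
    exact ⟨⟨cov.Hirrefl y, fun x hx h => hfree x hx (cov.Hsymm y x h)⟩,
      fun x hx => ⟨hfree x hx, hI.2.1 x hx⟩⟩
  · simp only [Finset.mem_insert, forall_eq_or_imp]
    refine ⟨by simp [Finset.insert_inter_of_mem hy, hI.inter_eq_empty hw], fun v hv => ?_⟩
    have hyv : y ∉ cov.L v :=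
      Finset.disjoint_left.1 (cov.disjoint w v (ne_of_mem_of_not_mem hv hw).symm) hy
    rw [Finset.insert_inter_of_notMem hyv, hI.2.2 v hv]

theorem IsPartialColoring.card_forbidden_le {cov : Cover G C} {S : Finset V} {I : Finset C}
    (hI : cov.IsPartialColoring S I) {w : V} (hw : w ∉ S) :
    ((cov.L w).filter fun y => ∃ x ∈ I, cov.HAdj x y).card ≤ ∑ v ∈ S, G.e w v := by
  have hsub : ((cov.L w).filter fun y => ∃ x ∈ I, cov.HAdj x y) ⊆
      S.biUnion fun v => (cov.L w).filter fun y => ∃ x ∈ I ∩ cov.L v, cov.HAdj x y := by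
    intro y hy
    obtain ⟨hyw, x, hxI, hxy⟩ := Finset.mem_filter.1 hy
    obtain ⟨v, hv, hxv⟩ := hI.1 x hxI
    exact Finset.mem_biUnion.2
      ⟨v, hv, Finset.mem_filter.2 ⟨hyw, x, Finset.mem_inter.2 ⟨hxI, hxv⟩, hxy⟩⟩
  refine (Finset.card_le_card hsub).trans (Finset.card_biUnion_le.trans (Finset.sum_le_sum ?_))
  intro v hv
  -- `v` carries a single color `x`, which has at most `e(v, w)` neighbors in `L w`.
  obtain ⟨x, hx⟩ := Finset.card_eq_one.1 (hI.2.2 v hv)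
  have hxv : x ∈ cov.L v := (Finset.mem_inter.1 (hx ▸ Finset.mem_singleton_self x)).2
  simp only [hx, Finset.mem_singleton, exists_eq_left]
  rw [G.symm]
  exact cov.matching v w (ne_of_mem_of_not_mem hv hw) x hxv

theorem IsPartialColoring.exists_extend {cov : Cover G C} {S : Finset V} {I : Finset C}
    (hI : cov.IsPartialColoring S I) {w : V} (hw : w ∉ S)
    (hcard : ∑ v ∈ S, G.e w v < (cov.L w).card) :
    ∃ y, cov.IsPartialColoring (insert w S) (insert y I) := by
  obtain ⟨y, hyw, hfree⟩ : ∃ y ∈ cov.L w, ∀ x ∈ I, ¬ cov.HAdj x y := by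
    by_contra! h
    have hall : (cov.L w).filter (fun y => ∃ x ∈ I, cov.HAdj x y) = cov.L w :=
      Finset.filter_true_of_mem h
    have hle := hI.card_forbidden_le hw
    rw [hall] at hle
    omega
  exact ⟨y, hI.extend hw hyw hfree⟩

theorem colorable_of_exists_adj_rank_lt [Fintype V] (cov : Cover G C) (r : V → ℕ) (v₀ : V)
    (hr : ∀ w, w ≠ v₀ → ∃ u, G.Adj w u ∧ r u < r w)
    (hL : ∀ v, G.deg v ≤ (cov.L v).card) (hv₀ : G.deg v₀ < (cov.L v₀).card) :
    cov.Colorable := by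
  -- The colored set stays closed upward under `r`, so a vertex `u ≠ v₀` of maximal rank among
  -- the uncolored ones still has its lower-rank neighbor uncolored.
  suffices h : ∀ n ≤ Fintype.card V, ∃ S : Finset V, S.card = n ∧
      (∀ w ∈ S, ∀ w', r w < r w' → w' ∈ S) ∧ ∃ I, cov.IsPartialColoring S I by
    obtain ⟨S, hS, -, I, hI⟩ := h _ le_rfl
    rw [Finset.card_eq_iff_eq_univ] at hS
    exact ⟨I, (hS ▸ hI).isColoring⟩
  intro n
  induction n with
  | zero => exact fun _ => ⟨∅, rfl, by simp, ∅, cov.isPartialColoring_empty⟩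
  | succ n ih =>
    intro hn
    obtain ⟨S, hScard, hSup, I, hI⟩ := ih (Nat.le_of_succ_le hn)
    have hSc : Sᶜ.Nonempty := by
      rw [Finset.nonempty_iff_ne_empty, Ne, Finset.compl_eq_empty_iff]
      rintro rfl
      rw [Finset.card_univ] at hScard
      omega
    obtain ⟨u, huS, humax⟩ := Finset.exists_max_image Sᶜ r hSc
    rw [Finset.mem_compl] at huS
    have hcard : ∑ v ∈ S, G.e u v < (cov.L u).card := by
      by_cases hu : u = v₀
      · subst hu
        exact lt_of_le_of_lt (Finset.sum_le_sum_of_subset (Finset.subset_univ S)) hv₀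
      · obtain ⟨u', hadj, hlt⟩ := hr u hu
        have hu'S : u' ∉ S := fun h => huS (hSup u' h u hlt)
        exact lt_of_lt_of_le (G.sum_e_lt_deg hu'S hadj) (hL u)
    obtain ⟨y, hy⟩ := IsPartialColoring.exists_extend hI huS hcard
    refine ⟨insert u S, by rw [Finset.card_insert_of_notMem huS, hScard], ?_, _, hy⟩
    simp only [Finset.mem_insert, forall_eq_or_imp]
    refine ⟨fun w' hlt => Or.inr ?_, fun w hw w' hlt => Or.inr (hSup w hw w' hlt)⟩
    by_contra hw'
    exact absurd (humax w' (Finset.mem_compl.2 hw')) (not_le.2 hlt)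

end Cover

end Multigraph

theorem SimpleGraph.Reachable.exists_adj_dist_lt {V : Type} {G : SimpleGraph V} {w v : V}
    (hr : G.Reachable w v) (hne : w ≠ v) : ∃ u, G.Adj w u ∧ G.dist u v < G.dist w v := by
  obtain ⟨p, hp⟩ := hr.exists_walk_length_eq_dist
  cases p with
  | nil => exact absurd rfl hne
  | cons h p =>
    have := SimpleGraph.dist_le p
    rw [SimpleGraph.Walk.length_cons] at hp
    exact ⟨_, h, by omega⟩

open Multigraph in
/-- **Lemma (extra color).** If `G` is a connected multigraph and `(L,H)` is a cover with
`|L v| ≥ deg v` for all `v` and `|L v₀| > deg v₀` for some `v₀`, then `G` is `(L,H)`-colorable. -/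
theorem statement4 {V C : Type} [Fintype V] (G : Multigraph V)
    (hconn : G.toSimpleGraph.Connected) (cov : Cover G C)
    (hL : ∀ v, G.deg v ≤ (cov.L v).card)
    (v₀ : V) (hv₀ : G.deg v₀ < (cov.L v₀).card) :
    cov.Colorable :=
  cov.colorable_of_exists_adj_rank_lt (fun w => G.toSimpleGraph.dist w v₀) v₀
    (fun w hw => (hconn.preconnected w v₀).exists_adj_dist_lt hw) hL hv₀
end

section
/- Let G be a 2-connected multigraph. Suppose u₁, u₂, w are three distinct vertices of G such that the multigraph G − u₁ − u₂ (obtained by deleting u₁ and u₂) is connected, e_G(u₁,u₂) < e_G(u₁,w), and e_G(u₂,w) ≥ 1. Then G is DP-degree-colorable. -/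
open scoped Classical

/-!
A cover of a connected multigraph with `deg v ≤ |L v|` everywhere and `deg v₀ < |L v₀|` at one
vertex is colorable: color greedily in order of decreasing distance from `v₀`, so that every
vertex other than `v₀` still has an uncolored neighbour when it is colored.

Precoloring a set `D` of vertices and removing from the other lists the colors adjacent to the
chosen ones leaves a cover of `G - D` that again satisfies `deg ≤ |L|`, strictly at any vertex
`v` where the precoloring blocks fewer colors of `L v` than there are edges from `v` to `D`.
In the triangle `u₁ u₂ w` either some color of `L w` has fewer than `e(u₁,w)` neighbours in
`L u₁` (precolor `w`), or some color of `L u₂` has fewer than `e(u₂,w)` neighbours in `L w`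
(precolor `u₂`), or else there are `c₂ ∈ L u₂`, a neighbour `y ∈ L w` of `c₂` and, since
`e(u₁,u₂) < e(u₁,w)`, a neighbour `c₁ ∈ L u₁` of `y` not adjacent to `c₂`; precoloring `u₁, u₂`
with `c₁, c₂` then blocks `y` at `w` twice.
-/

theorem SimpleGraph.Connected.exists_adj_dist_lt {W : Type} {H : SimpleGraph W}
    (hconn : H.Connected) {v₀ v : W} (hv : v ≠ v₀) :
    ∃ u, H.Adj v u ∧ H.dist v₀ u < H.dist v₀ v := by
  obtain ⟨p, hp⟩ := hconn.exists_walk_length_eq_dist v v₀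
  cases p with
  | nil => exact absurd rfl hv
  | cons hadj q =>
    refine ⟨_, hadj, ?_⟩
    rw [H.dist_comm, H.dist_comm (u := v₀), ← hp, SimpleGraph.Walk.length_cons]
    exact Nat.lt_succ_of_le (SimpleGraph.dist_le q)

namespace Multigraph

open Finset

variable {V C : Type}

lemma e_le_deg [Fintype V] (G : Multigraph V) (v u : V) : G.e v u ≤ G.deg v :=
  single_le_sum (f := G.e v) (fun _ _ => Nat.zero_le _) (mem_univ u)

lemma deg_induce_add_sum [Fintype V] (G : Multigraph V) (D : Finset V)
    (v : ((↑D)ᶜ : Set V)) :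
    (G.induce (↑D)ᶜ).deg v + ∑ d ∈ D, G.e v d = G.deg v := by
  rw [deg, deg, ← sum_compl_add_sum D]
  congr 1
  exact (sum_subtype Dᶜ (p := (· ∈ ((↑D)ᶜ : Set V))) (fun u => by simp) (G.e v)).symm

namespace Cover

variable {G : Multigraph V} (cov : Cover G C)

lemma card_filter_adj_le {u v : V} (huv : u ≠ v) {y : C} (hy : y ∈ cov.L u) :
    #((cov.L v).filter (cov.HAdj · y)) ≤ G.e v u := by
  rw [G.symm, ← filter_congr fun x _ => ⟨cov.Hsymm y x, cov.Hsymm x y⟩]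
  exact cov.matching u v huv y hy

lemma card_filter_exists_adj_le (v : V) (s : Finset V) (g : V → C)
    (hs : ∀ u ∈ s, u ≠ v ∧ g u ∈ cov.L u) :
    #((cov.L v).filter fun x => ∃ u ∈ s, cov.HAdj x (g u)) ≤ ∑ u ∈ s, G.e v u :=
  calc #((cov.L v).filter fun x => ∃ u ∈ s, cov.HAdj x (g u))
      ≤ #(s.biUnion fun u => (cov.L v).filter (cov.HAdj · (g u))) := by
        refine card_le_card fun x hx => ?_
        obtain ⟨hxv, u, hu, hxu⟩ := mem_filter.mp hx
        exact mem_biUnion.mpr ⟨u, hu, mem_filter.mpr ⟨hxv, hxu⟩⟩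
    _ ≤ ∑ u ∈ s, #((cov.L v).filter (cov.HAdj · (g u))) := card_biUnion_le
    _ ≤ ∑ u ∈ s, G.e v u :=
        sum_le_sum fun u hu => cov.card_filter_adj_le (hs u hu).1 (hs u hu).2

def IsColoringFun (g : V → C) : Prop :=
  (∀ v, g v ∈ cov.L v) ∧ ∀ u v, ¬ cov.HAdj (g u) (g v)

variable {cov}

lemma IsColoringFun.colorable [Fintype V] {g : V → C} (hg : cov.IsColoringFun g) :
    cov.Colorable := by
  refine ⟨univ.image g, ?_, ?_, fun v => card_eq_one.mpr ⟨g v, ext fun x => ?_⟩⟩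
  · simp only [mem_image, mem_univ, true_and]
    rintro _ ⟨v, rfl⟩
    exact ⟨v, hg.1 v⟩
  · simp only [mem_image, mem_univ, true_and]
    rintro _ ⟨u, rfl⟩ _ ⟨v, rfl⟩
    exact hg.2 u v
  · simp only [mem_inter, mem_image, mem_univ, true_and, mem_singleton]
    constructor
    · rintro ⟨⟨u, rfl⟩, hu⟩
      obtain rfl : u = v := by_contra fun huv =>
        disjoint_left.mp (cov.disjoint u v huv) (hg.1 u) hu
      rfl
    · rintro rfl
      exact ⟨⟨v, rfl⟩, hg.1 v⟩

variable (cov)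

theorem exists_isColoringFun_of_sum_lt [Fintype V] (f : V → ℕ)
    (h : ∀ v, ∑ u ∈ univ.filter (fun u => f v ≤ f u), G.e v u < #(cov.L v)) :
    ∃ g, cov.IsColoringFun g := by
  rcases isEmpty_or_nonempty V with hV | ⟨⟨v₀⟩⟩
  · exact ⟨isEmptyElim, isEmptyElim, isEmptyElim⟩
  obtain ⟨x₀, -⟩ := card_pos.mp (pos_of_gt (h v₀))
  suffices ∀ s : Finset V, ∃ g : V → C,
      (∀ v ∈ s, g v ∈ cov.L v) ∧ ∀ u ∈ s, ∀ v ∈ s, ¬ cov.HAdj (g u) (g v) by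
    obtain ⟨g, hmem, hind⟩ := this univ
    exact ⟨g, fun v => hmem v (mem_univ v), fun u v => hind u (mem_univ u) v (mem_univ v)⟩
  intro s
  induction s using induction_on_min_value f with
  | empty => exact ⟨fun _ => x₀, by simp, by simp⟩
  | insert a s ha hmin ih =>
    obtain ⟨g, hmem, hind⟩ := ih
    obtain ⟨x, hxa, hx⟩ : ∃ x ∈ cov.L a, ¬ ∃ u ∈ s, cov.HAdj x (g u) := by
      have hblocked := cov.card_filter_exists_adj_le a s g fun u hu =>
        ⟨ne_of_mem_of_not_mem hu ha, hmem u hu⟩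
      have hsub : ∑ u ∈ s, G.e a u ≤ ∑ u ∈ univ.filter (fun u => f a ≤ f u), G.e a u :=
        sum_le_sum_of_subset fun u hu => mem_filter.mpr ⟨mem_univ u, hmin u hu⟩
      by_contra! hall
      rw [filter_true_of_mem hall] at hblocked
      exact (hblocked.trans hsub).not_gt (h a)
    have hfresh : ∀ u ∈ s, ¬ cov.HAdj x (g u) := fun u hu h => hx ⟨u, hu, h⟩
    refine ⟨Function.update g a x, fun v hv => ?_, fun u hu v hv => ?_⟩
    · rcases eq_or_ne v a with rfl | hva
      · simpa using hxa
      · simpa [hva] using hmem v ((mem_insert.mp hv).resolve_left hva)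
    · by_cases hua : u = a <;> by_cases hva : v = a
      · simpa [hua, hva] using cov.Hirrefl x
      · simpa [hua, hva] using hfresh v ((mem_insert.mp hv).resolve_left hva)
      · simpa [hua, hva] using
          fun h => hfresh u ((mem_insert.mp hu).resolve_left hua) (cov.Hsymm _ _ h)
      · simpa [hua, hva] using hind u ((mem_insert.mp hu).resolve_left hua) v
          ((mem_insert.mp hv).resolve_left hva)

theorem exists_isColoringFun_of_connected [Fintype V] (hconn : G.toSimpleGraph.Connected)
    (hdeg : ∀ v, G.deg v ≤ #(cov.L v)) {v₀ : V} (hv₀ : G.deg v₀ < #(cov.L v₀)) :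
    ∃ g, cov.IsColoringFun g := by
  refine cov.exists_isColoringFun_of_sum_lt (G.toSimpleGraph.dist v₀) fun v => ?_
  rcases eq_or_ne v v₀ with rfl | hv
  · exact (sum_le_sum_of_subset (filter_subset _ _)).trans_lt hv₀
  obtain ⟨u, hadj, hcloser⟩ := hconn.exists_adj_dist_lt hv
  have hsplit := sum_erase_add univ (G.e v) (mem_univ u)
  calc ∑ u ∈ univ.filter (fun u => _ ≤ _), G.e v u ≤ ∑ u ∈ univ.erase u, G.e v u :=
        sum_le_sum_of_subset fun u' hu' =>
          mem_erase.mpr ⟨by rintro rfl; exact (mem_filter.mp hu').2.not_gt hcloser, mem_univ u'⟩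
    _ < G.deg v := by have : 1 ≤ G.e v u := hadj.2; rw [deg]; omega
    _ ≤ #(cov.L v) := hdeg v

def induce (S : Set V) (L' : S → Finset C) (hL' : ∀ v, L' v ⊆ cov.L v) :
    Cover (G.induce S) C where
  L := L'
  HAdj x y := cov.HAdj x y ∧ (∃ u, x ∈ L' u) ∧ ∃ v, y ∈ L' v
  Hsymm x y h := ⟨cov.Hsymm x y h.1, h.2.2, h.2.1⟩
  Hirrefl x h := cov.Hirrefl x h.1
  disjoint u v huv := (cov.disjoint u v (Subtype.coe_injective.ne huv)).mono (hL' u) (hL' v)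
  cliques v x hx y hy hxy := ⟨cov.cliques v x (hL' v hx) y (hL' v hy) hxy, ⟨v, hx⟩, ⟨v, hy⟩⟩
  edges_within := by
    rintro x y ⟨hxy, ⟨u, hxu⟩, ⟨v, hyv⟩⟩
    refine ⟨u, v, hxu, hyv, ?_⟩
    rcases eq_or_ne u v with rfl | huv
    · exact Or.inl rfl
    refine Or.inr ⟨huv, ?_⟩
    exact (card_pos.mpr ⟨y, mem_filter.mpr ⟨hL' v hyv, hxy⟩⟩).trans_le
      (cov.matching u v (Subtype.coe_injective.ne huv) x (hL' u hxu))
  matching u v huv x hx := by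
    refine (card_le_card fun y hy => ?_).trans
      (cov.matching u v (Subtype.coe_injective.ne huv) x (hL' u hx))
    simp only [mem_filter] at hy ⊢
    exact ⟨hL' v hy.1, hy.2.1⟩

variable {cov}

lemma IsColoringFun.extend {S : Set V} {L' : S → Finset C} {hL' : ∀ v, L' v ⊆ cov.L v}
    {g : S → C} (hg : (cov.induce S L' hL').IsColoringFun g) (c : V → C)
    (hc : ∀ d ∉ S, c d ∈ cov.L d) (hcind : ∀ d ∉ S, ∀ d' ∉ S, ¬ cov.HAdj (c d) (c d'))
    (hL'c : ∀ v, ∀ x ∈ L' v, ∀ d ∉ S, ¬ cov.HAdj x (c d)) :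
    cov.IsColoringFun fun v => if h : v ∈ S then g ⟨v, h⟩ else c v := by
  refine ⟨fun v => ?_, fun u v => ?_⟩
  · by_cases hv : v ∈ S
    · simpa [hv] using hL' _ (hg.1 ⟨v, hv⟩)
    · simpa [hv] using hc v hv
  · by_cases hu : u ∈ S <;> by_cases hv : v ∈ S <;> simp only [hu, hv, dite_true, dite_false]
    · exact fun h => hg.2 _ _ ⟨h, ⟨_, hg.1 _⟩, ⟨_, hg.1 _⟩⟩
    · exact hL'c _ _ (hg.1 _) v hv
    · exact fun h => hL'c _ _ (hg.1 _) u hu (cov.Hsymm _ _ h)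
    · exact hcind u hu v hv

variable (cov)

theorem colorable_of_precoloring [Fintype V] (hdeg : ∀ v, G.deg v ≤ #(cov.L v))
    (D : Finset V) (hconn : (G.induce (↑D)ᶜ).toSimpleGraph.Connected) (c : V → C)
    (hc : ∀ d ∈ D, c d ∈ cov.L d) (hcind : ∀ d ∈ D, ∀ d' ∈ D, ¬ cov.HAdj (c d) (c d'))
    {v₀ : V} (hv₀ : v₀ ∉ D)
    (hsave : #((cov.L v₀).filter fun x => ∃ d ∈ D, cov.HAdj x (c d)) < ∑ d ∈ D, G.e v₀ d) :
    cov.Colorable := by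
  let L' : ((↑D)ᶜ : Set V) → Finset C :=
    fun v => (cov.L v).filter fun x => ¬ ∃ d ∈ D, cov.HAdj x (c d)
  have hroom (v : ((↑D)ᶜ : Set V)) : (G.induce (↑D)ᶜ).deg v + ∑ d ∈ D, G.e v d ≤
      #((cov.L v).filter fun x => ∃ d ∈ D, cov.HAdj x (c d)) + #(L' v) :=
    (G.deg_induce_add_sum D v).trans_le ((hdeg v).trans (card_filter_add_card_filter_not _).ge)
  have hblocked (v : ((↑D)ᶜ : Set V)) :
      #((cov.L v).filter fun x => ∃ d ∈ D, cov.HAdj x (c d)) ≤ ∑ d ∈ D, G.e v d :=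
    cov.card_filter_exists_adj_le v D c fun d hd => ⟨fun h => v.2 (h ▸ hd), hc d hd⟩
  obtain ⟨g, hg⟩ := (cov.induce _ L' fun v => filter_subset _ _).exists_isColoringFun_of_connected
    hconn (v₀ := ⟨v₀, hv₀⟩)
    (fun v => show _ ≤ #(L' v) by have := hroom v; have := hblocked v; omega)
    (show _ < #(L' _) by have := hroom ⟨v₀, hv₀⟩; dsimp only at this; omega)
  refine (hg.extend c (by simpa using hc) (by simpa using hcind) ?_).colorable
  intro v x hx d hd hxd
  exact (mem_filter.mp hx).2 ⟨d, by simpa using hd, hxd⟩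

theorem colorable_of_precolor_vertex [Fintype V] (hdeg : ∀ v, G.deg v ≤ #(cov.L v)) {w : V}
    (hconn : (G.induce ({w} : Set V)ᶜ).toSimpleGraph.Connected) {y : C} (hy : y ∈ cov.L w)
    {v₀ : V} (hv₀ : v₀ ≠ w) (hsave : #((cov.L v₀).filter (cov.HAdj · y)) < G.e v₀ w) :
    cov.Colorable :=
  cov.colorable_of_precoloring hdeg {w} (by rwa [coe_singleton]) (fun _ => y) (by simpa using hy)
    (by simpa using cov.Hirrefl y) (by simpa using hv₀) (by simpa using hsave)

theorem colorable_of_precolor_pair [Fintype V] (hdeg : ∀ v, G.deg v ≤ #(cov.L v))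
    {u₁ u₂ w : V} (h12 : u₁ ≠ u₂) (h1w : u₁ ≠ w) (h2w : u₂ ≠ w)
    (hconn : (G.induce ({u₁, u₂} : Set V)ᶜ).toSimpleGraph.Connected) {c₁ c₂ y : C}
    (hc₁ : c₁ ∈ cov.L u₁) (hc₂ : c₂ ∈ cov.L u₂) (hy : y ∈ cov.L w) (hc₁₂ : ¬ cov.HAdj c₁ c₂)
    (hyc₁ : cov.HAdj y c₁) (hyc₂ : cov.HAdj y c₂) :
    cov.Colorable := by
  have hoverlap : #((cov.L w).filter fun x => cov.HAdj x c₁ ∨ cov.HAdj x c₂) + 1 ≤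
      #((cov.L w).filter (cov.HAdj · c₁)) + #((cov.L w).filter (cov.HAdj · c₂)) := by
    rw [filter_or, ← card_union_add_card_inter]
    gcongr
    exact card_pos.mpr ⟨y, by simp [hy, hyc₁, hyc₂]⟩
  refine cov.colorable_of_precoloring hdeg {u₁, u₂} (by rwa [coe_insert, coe_singleton])
    (fun v => if v = u₁ then c₁ else c₂) ?_ ?_ (v₀ := w) (by simp [h1w.symm, h2w.symm]) ?_
  · simp [h12.symm, hc₁, hc₂]
  · have hc₂₁ : ¬ cov.HAdj c₂ c₁ := fun h => hc₁₂ (cov.Hsymm _ _ h)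
    simp [h12.symm, hc₁₂, hc₂₁, cov.Hirrefl]
  · have h₁ := cov.card_filter_adj_le h1w hc₁
    have h₂ := cov.card_filter_adj_le h2w hc₂
    simp only [sum_pair h12, exists_mem_insert, mem_singleton, exists_eq_left, if_pos,
      if_neg h12.symm]
    omega

end Cover

end Multigraph

open Multigraph in
/-- **Lemma (triangle).** Let `G` be a 2-connected multigraph and `u₁, u₂, w` distinct vertices
such that `G - u₁ - u₂` is connected, `e_G(u₁,u₂) < e_G(u₁,w)` and `e_G(u₂,w) ≥ 1`. Then `G`
is DP-degree-colorable. -/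
theorem statement7 {V : Type} [Fintype V] (G : Multigraph V) (h2c : TwoConnected G)
    (u₁ u₂ w : V) (h12 : u₁ ≠ u₂) (h1w : u₁ ≠ w) (h2w : u₂ ≠ w)
    (hdel : (G.induce (({u₁, u₂} : Set V)ᶜ)).toSimpleGraph.Connected)
    (hlt : G.e u₁ u₂ < G.e u₁ w) (hpos : 1 ≤ G.e u₂ w) :
    DPDegreeColorable G := by
  intro C cov hdeg
  by_cases hA : ∃ y ∈ cov.L w, ((cov.L u₁).filter (cov.HAdj · y)).card < G.e u₁ w
  · obtain ⟨y, hy, hsave⟩ := hA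
    exact cov.colorable_of_precolor_vertex hdeg (h2c.2.2 w) hy h1w hsave
  by_cases hB : ∃ z ∈ cov.L u₂, ((cov.L w).filter (cov.HAdj · z)).card < G.e w u₂
  · obtain ⟨z, hz, hsave⟩ := hB
    exact cov.colorable_of_precolor_vertex hdeg (h2c.2.2 u₂) hz h2w.symm hsave
  push Not at hA hB
  obtain ⟨c₂, hc₂⟩ : (cov.L u₂).Nonempty :=
    Finset.card_pos.mp ((hpos.trans (G.e_le_deg u₂ w)).trans (hdeg u₂))
  obtain ⟨y, hy⟩ : ((cov.L w).filter (cov.HAdj · c₂)).Nonempty :=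
    Finset.card_pos.mp ((G.symm u₂ w ▸ hpos).trans (hB c₂ hc₂))
  rw [Finset.mem_filter] at hy
  -- `y` has more neighbours in `L u₁` than `c₂` has, so one of them is not adjacent to `c₂`
  obtain ⟨c₁, hc₁y, hc₁c₂⟩ := Finset.not_subset.mp fun hsub =>
    ((Finset.card_le_card hsub).trans (cov.card_filter_adj_le h12.symm hc₂)).not_gt
      (hlt.trans_le (hA y hy.1))
  rw [Finset.mem_filter] at hc₁y
  exact cov.colorable_of_precolor_pair hdeg h12 h1w h2w hdel hc₁y.1 hc₂ hy.1
    (fun h => hc₁c₂ (Finset.mem_filter.mpr ⟨hc₁y.1, h⟩)) (cov.Hsymm _ _ hc₁y.2) hy.2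
end
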